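/- Special soundness of the Chaum–Pedersen proof: in a group G of prime order p, given u = g^r' for some unknown r', fixed α α' : G, and two accepting transcripts (β₁, γ₁), (β₂, γ₂) with β₁ ≠ β₂ in ZMod p satisfying g^{γᵢ} = α · u^{βᵢ} and h^{γᵢ} = α' · v^{βᵢ} for i = 1,2, the witness w = (γ₁ - γ₂)/(β₁ - β₂) satisfies g^w = u and h^w = v. -/
import Mathlib

private lemma pow_val_mul {G : Type*} [CommGroup G] [Fintype G]
    (p : ℕ) [Fact p.Prime] (hG : Fintype.card G = p) (x : G) (a b : ZMod p) :
    (x ^ a.val) ^ b.val = x ^ (a * b).val := by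
  have hd : orderOf x ∣ p := hG ▸ orderOf_dvd_card
  rw [← pow_mul, pow_eq_pow_iff_modEq]
  have : a.val * b.val ≡ (a * b).val [MOD p] := by
    rw [ZMod.val_mul]; exact (Nat.mod_modEq _ p).symm
  exact this.of_dvd hd

private lemma pow_val_add {G : Type*} [CommGroup G] [Fintype G]
    (p : ℕ) [Fact p.Prime] (hG : Fintype.card G = p) (x : G) (a b : ZMod p) :
    x ^ a.val * x ^ b.val = x ^ (a + b).val := by
  have hd : orderOf x ∣ p := hG ▸ orderOf_dvd_card
  rw [← pow_add, pow_eq_pow_iff_modEq]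
  have : a.val + b.val ≡ (a + b).val [MOD p] := by
    rw [ZMod.val_add]; exact (Nat.mod_modEq _ p).symm
  exact this.of_dvd hd

private lemma pow_val_sub {G : Type*} [CommGroup G] [Fintype G]
    (p : ℕ) [Fact p.Prime] (hG : Fintype.card G = p) (x : G) (a b : ZMod p) :
    x ^ (a - b).val = x ^ a.val / x ^ b.val := by
  rw [eq_div_iff_mul_eq', pow_val_add p hG, sub_add_cancel]

private lemma key {G : Type*} [CommGroup G] [Fintype G]
    (p : ℕ) [Fact p.Prime] (hG : Fintype.card G = p)
    (x y α : G) (β₁ β₂ γ₁ γ₂ : ZMod p) (hβ : β₁ ≠ β₂)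
    (h1 : x ^ γ₁.val = α * y ^ β₁.val) (h2 : x ^ γ₂.val = α * y ^ β₂.val) :
    x ^ (((γ₁ - γ₂) / (β₁ - β₂)).val) = y := by
  have hδ : β₁ - β₂ ≠ 0 := sub_ne_zero.mpr hβ
  have e1 : x ^ (γ₁ - γ₂).val = y ^ (β₁ - β₂).val := by
    rw [pow_val_sub p hG, pow_val_sub p hG, h1, h2]
    exact mul_div_mul_left_eq_div _ _ α
  have e2 : (x ^ (((γ₁ - γ₂) / (β₁ - β₂)).val)) ^ (β₁ - β₂).val
      = y ^ (β₁ - β₂).val := by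
    rw [pow_val_mul p hG, div_mul_cancel₀ _ hδ, e1]
  calc x ^ (((γ₁ - γ₂) / (β₁ - β₂)).val)
      = x ^ (((γ₁ - γ₂) / (β₁ - β₂)) * ((β₁ - β₂) * (β₁ - β₂)⁻¹)).val := by
        rw [mul_inv_cancel₀ hδ, mul_one]
    _ = y := by
        rw [← mul_assoc, ← pow_val_mul p hG, ← pow_val_mul p hG, e2,
          pow_val_mul p hG, mul_inv_cancel₀ hδ, ZMod.val_one_eq_one_mod,
          Nat.mod_eq_of_lt (Fact.out : p.Prime).one_lt]
        simp

/-- Special soundness of the Chaum–Pedersen proof in a group of prime order `p`. -/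
theorem chaum_pedersen_special_soundness {G : Type*} [CommGroup G] [Fintype G]
    (p : ℕ) [Fact p.Prime] (hG : Fintype.card G = p)
    (g h u v α α' : G) (hg : orderOf g = p)
    (β₁ β₂ γ₁ γ₂ : ZMod p) (hβ : β₁ ≠ β₂)
    (h1 : g ^ γ₁.val = α * u ^ β₁.val) (h2 : g ^ γ₂.val = α * u ^ β₂.val)
    (h3 : h ^ γ₁.val = α' * v ^ β₁.val) (h4 : h ^ γ₂.val = α' * v ^ β₂.val) :
    g ^ (((γ₁ - γ₂) / (β₁ - β₂)).val) = u ∧ h ^ (((γ₁ - γ₂) / (β₁ - β₂)).val) = v :=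
  ⟨key p hG g u α β₁ β₂ γ₁ γ₂ hβ h1 h2, key p hG h v α' β₁ β₂ γ₁ γ₂ hβ h3 h4⟩
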